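/- Regularity of linearized localization: let C ∈ ℝ^{d_u × d_u} be symmetric positive semidefinite, let Ψ ∈ ℝ^{d_u × d_u} have nonnegative entries, and let H ∈ ℝ^{d_y × d_u} satisfy Σ_{j=1}^{d_y}|H_{j,k}| ≤ L for all k and Σ_{k=1}^{d_u}|H_{j,k}| ≤ L for all j. Define C^{up} = C Hᵀ and C̃^{up} = (C ∘ Ψ) Hᵀ. Then for every index i, Σ_{j=1}^{d_y} C̃^{up}_{i,j} C^{up}_{i,j} ≤ L_R · C_{i,i} · ‖C‖_max, where L_R = L² · max_i Σ_{k=1}^{d_u} Ψ_{i,k}. -/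

import Mathlib

/-!
Every entry of the `i`-th row of `C` is bounded by `s = √(C_{ii} ‖C‖_max)`, by the
Cauchy–Schwarz inequality `C_{ik}² ≤ C_{ii} C_{kk}` for positive semidefinite matrices. Writing
the sum as `(H u) ⬝ᵥ (H v) = u ⬝ᵥ (Hᵀ H v)` with `u = (C ∘ Ψ)_i` and `v = C_i`, the row sums of
`H` bound `‖H v‖_∞ ≤ L s`, its column sums bound `‖Hᵀ H v‖_∞ ≤ L² s`, and
`‖u‖₁ ≤ s Σ_k Ψ_{ik}` finishes the estimate.
-/

open Matrix

/-- The maximal diagonal entry of a matrix; for a positive semidefinite matrix this equals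
`‖C‖_max = max_{i,j}|C_{i,j}|`. -/
noncomputable def maxDiag {n : ℕ} (A : Matrix (Fin n) (Fin n) ℝ) : ℝ := ⨆ i, A i i

open Finset

theorem le_maxDiag {n : ℕ} (A : Matrix (Fin n) (Fin n) ℝ) (i : Fin n) : A i i ≤ maxDiag A :=
  le_ciSup (f := fun i ↦ A i i) (Set.finite_range _).bddAbove i

namespace Matrix

section AbsSumBounds

variable {m n : Type*} [Fintype n]

theorem dotProduct_le_sum_abs_mul {u w : n → ℝ} {c : ℝ} (hw : ∀ k, |w k| ≤ c) :
    u ⬝ᵥ w ≤ (∑ k, |u k|) * c :=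
  calc u ⬝ᵥ w ≤ ∑ k, |u k * w k| := sum_le_sum fun k _ => le_abs_self _
    _ ≤ ∑ k, |u k| * c := sum_le_sum fun k _ => by
        rw [abs_mul]; exact mul_le_mul_of_nonneg_left (hw k) (abs_nonneg _)
    _ = (∑ k, |u k|) * c := (sum_mul ..).symm

theorem abs_mulVec_apply_le {H : Matrix m n ℝ} {L b : ℝ} (hrow : ∀ j, ∑ k, |H j k| ≤ L)
    (hb : 0 ≤ b) {v : n → ℝ} (hv : ∀ k, |v k| ≤ b) (j : m) : |(H *ᵥ v) j| ≤ L * b :=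
  calc |(H *ᵥ v) j| ≤ ∑ k, |H j k * v k| := abs_sum_le_sum_abs _ _
    _ ≤ ∑ k, |H j k| * b := sum_le_sum fun k _ => by
        rw [abs_mul]; exact mul_le_mul_of_nonneg_left (hv k) (abs_nonneg _)
    _ = (∑ k, |H j k|) * b := (sum_mul ..).symm
    _ ≤ L * b := mul_le_mul_of_nonneg_right (hrow j) hb

theorem mulVec_dotProduct_mulVec_le [Fintype m] {H : Matrix m n ℝ} {L b : ℝ}
    (hcol : ∀ k, ∑ j, |H j k| ≤ L) (hrow : ∀ j, ∑ k, |H j k| ≤ L) (hL : 0 ≤ L) (hb : 0 ≤ b)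
    (u : n → ℝ) {v : n → ℝ} (hv : ∀ k, |v k| ≤ b) :
    (H *ᵥ u) ⬝ᵥ (H *ᵥ v) ≤ L ^ 2 * b * ∑ k, |u k| := by
  have hHv : ∀ j, |(H *ᵥ v) j| ≤ L * b := abs_mulVec_apply_le hrow hb hv
  have hHtHv : ∀ k, |(Hᵀ *ᵥ (H *ᵥ v)) k| ≤ L * (L * b) :=
    abs_mulVec_apply_le (H := Hᵀ) hcol (mul_nonneg hL hb) hHv
  calc (H *ᵥ u) ⬝ᵥ (H *ᵥ v) = u ⬝ᵥ (Hᵀ *ᵥ (H *ᵥ v)) := by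
        rw [← vecMul_transpose H u, ← dotProduct_mulVec]
    _ ≤ (∑ k, |u k|) * (L * (L * b)) := dotProduct_le_sum_abs_mul hHtHv
    _ = L ^ 2 * b * ∑ k, |u k| := by ring

theorem sum_mul_transpose_apply_mul [Fintype m] {l : Type*} (A B : Matrix l n ℝ)
    (H : Matrix m n ℝ) (i : l) :
    ∑ j, (A * Hᵀ) i j * (B * Hᵀ) i j = (H *ᵥ A i) ⬝ᵥ (H *ᵥ B i) := by
  simp only [mul_apply, transpose_apply, dotProduct, mulVec, mul_comm]

end AbsSumBounds

namespace PosSemidef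

variable {n : Type*} {C : Matrix n n ℝ}

theorem sq_apply_le (hC : C.PosSemidef) (k l : n) : C k l ^ 2 ≤ C k k * C l l := by
  have hdet := (hC.submatrix ![k, l]).det_nonneg
  have hsymm : C l k = C k l := hC.1.apply k l
  simp only [det_fin_two, submatrix_apply, cons_val_zero, cons_val_one, hsymm] at hdet
  rw [sq]; linarith

theorem abs_apply_le_sqrt (hC : C.PosSemidef) (k l : n) : |C k l| ≤ √(C k k * C l l) :=
  Real.abs_le_sqrt (hC.sq_apply_le k l)

theorem abs_apply_le_sqrt_mul_maxDiag {d : ℕ} {C : Matrix (Fin d) (Fin d) ℝ} (hC : C.PosSemidef)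
    (i k : Fin d) : |C i k| ≤ √(C i i * maxDiag C) :=
  (hC.abs_apply_le_sqrt i k).trans <|
    Real.sqrt_le_sqrt (mul_le_mul_of_nonneg_left (le_maxDiag C k) hC.diag_nonneg)

end PosSemidef

end Matrix

/-- **Regularity of the linearized localization scheme** (Lemma 4.5 of the paper).
With `C^{up} = C Hᵀ` and `C̃^{up} = (C ∘ Ψ) Hᵀ`, if the rows and columns of `H` have
absolute sums at most `L`, then for every `i`,
`Σ_j C̃^{up}_{i,j} C^{up}_{i,j} ≤ L_R C_{i,i} ‖C‖_max`, where `L_R = L² max_i Σ_k Ψ_{i,k}`. -/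
theorem regularity_linearized_localization {du dy : ℕ}
    (C Ψ : Matrix (Fin du) (Fin du) ℝ) (H : Matrix (Fin dy) (Fin du) ℝ)
    (hC : C.PosSemidef) (hΨnn : ∀ i j, 0 ≤ Ψ i j)
    (L : ℝ)
    (hcol : ∀ k, ∑ j, |H j k| ≤ L) (hrow : ∀ j, ∑ k, |H j k| ≤ L)
    (L_R : ℝ) (hL_R : L_R = L ^ 2 * ⨆ i : Fin du, ∑ k, Ψ i k) :
    ∀ i, ∑ j, (C.hadamard Ψ * Hᵀ) i j * (C * Hᵀ) i j ≤ L_R * C i i * maxDiag C := by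
  intro i
  set s := √(C i i * maxDiag C)
  have hCM : 0 ≤ C i i * maxDiag C :=
    mul_nonneg hC.diag_nonneg (hC.diag_nonneg.trans (le_maxDiag C i))
  have hss : s * s = C i i * maxDiag C := Real.mul_self_sqrt hCM
  have hCrow : ∀ k, |C i k| ≤ s := hC.abs_apply_le_sqrt_mul_maxDiag i
  have hCΨrow : ∑ k, |C.hadamard Ψ i k| ≤ s * ∑ k, Ψ i k := by
    rw [mul_sum]
    refine sum_le_sum fun k _ => ?_
    rw [hadamard_apply, abs_mul, abs_of_nonneg (hΨnn i k)]
    exact mul_le_mul_of_nonneg_right (hCrow k) (hΨnn i k)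
  have hL : 0 ≤ L := (sum_nonneg fun j _ => abs_nonneg _).trans (hcol i)
  have hΨsup : ∑ k, Ψ i k ≤ ⨆ i, ∑ k, Ψ i k :=
    le_ciSup (f := fun i ↦ ∑ k, Ψ i k) (Set.finite_range _).bddAbove i
  calc ∑ j, (C.hadamard Ψ * Hᵀ) i j * (C * Hᵀ) i j
      = (H *ᵥ C.hadamard Ψ i) ⬝ᵥ (H *ᵥ C i) := sum_mul_transpose_apply_mul _ _ _ _
    _ ≤ L ^ 2 * s * ∑ k, |C.hadamard Ψ i k| :=
        mulVec_dotProduct_mulVec_le hcol hrow hL (Real.sqrt_nonneg _) _ hCrow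
    _ ≤ L ^ 2 * s * (s * ∑ k, Ψ i k) := by gcongr
    _ = L ^ 2 * (∑ k, Ψ i k) * (C i i * maxDiag C) := by rw [← hss]; ring
    _ ≤ L_R * (C i i * maxDiag C) := by rw [hL_R]; gcongr
    _ = L_R * C i i * maxDiag C := (mul_assoc ..).symm
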